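/- arXiv:2511.12615 — 4 statements merged into one kernel-verified Lean document; each statement's English description precedes it below -/
import Mathlib

section
/- For the function sequence (f_n) defined recursively by integration of antisymmetrized extensions (with f_0 ≡ c_0 > 0 on [0,t_0], and f_{n+1}(t) = ∫₀ᵗ f̃_{n+1}, where f̃_{n+1}(t) = f_n(t) on [0,t_n], = -f_n(t_{n+1}-t) on [t_{n+1}-t_n, t_{n+1}], = 0 elsewhere, and t_{n+1} ≥ 2t_n), every f_n is nonnegative: f_n(t) ≥ 0 for all t ∈ [0,t_n] and all n ≥ 0. -/
open MeasureTheory Set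

/-- Antisymmetrized extension: `f̃_{n+1}` built from `f_n = g` with times `tn = t_n`, `tn1 = t_{n+1}`. -/
noncomputable def ftilde (g : ℝ → ℝ) (tn tn1 : ℝ) (t : ℝ) : ℝ :=
  if 0 ≤ t ∧ t ≤ tn then g t
  else if tn1 - tn ≤ t ∧ t ≤ tn1 then -g (tn1 - t)
  else 0

/-- The recursively defined sequence `f_n` (with `f_0 ≡ c`). -/
noncomputable def fseq (ts : ℕ → ℝ) (c : ℝ) : ℕ → ℝ → ℝ
  | 0 => fun _ => c
  | n + 1 => fun t => ∫ s in (0:ℝ)..t, ftilde (fseq ts c n) (ts n) (ts (n + 1)) s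

lemma ftilde_ae_eq (g : ℝ → ℝ) (tn tn1 : ℝ) (h : 2 * tn ≤ tn1) {x : ℝ} (hx : x ≠ tn) :
    ftilde g tn tn1 x =
      (Icc 0 tn).indicator g x + (Icc (tn1 - tn) tn1).indicator (fun s => -g (tn1 - s)) x := by
  unfold ftilde
  by_cases h1 : 0 ≤ x ∧ x ≤ tn
  · have h2 : x ∉ Icc (tn1 - tn) tn1 := by
      intro ⟨ha, _⟩
      exact hx (le_antisymm h1.2 (by linarith))
    rw [if_pos h1, indicator_of_mem (mem_Icc.mpr h1), indicator_of_notMem h2, add_zero]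
  · rw [if_neg h1, indicator_of_notMem (by simpa [mem_Icc] using h1), zero_add]
    by_cases h2 : tn1 - tn ≤ x ∧ x ≤ tn1
    · rw [if_pos h2, indicator_of_mem (mem_Icc.mpr h2)]
    · rw [if_neg h2, indicator_of_notMem (by simpa [mem_Icc] using h2)]

lemma ftilde_intble {g : ℝ → ℝ} (hg : Continuous g) {tn tn1 : ℝ} (h : 2 * tn ≤ tn1)
    (a b : ℝ) : IntervalIntegrable (ftilde g tn tn1) volume a b := by
  rw [intervalIntegrable_iff]
  have h1 : IntegrableOn ((Icc 0 tn).indicator g) (Set.uIoc a b) volume :=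
    (hg.integrableOn_uIoc).indicator measurableSet_Icc
  have h2 : IntegrableOn ((Icc (tn1 - tn) tn1).indicator (fun s => -g (tn1 - s))) (Set.uIoc a b) volume :=
    (((hg.comp (continuous_const.sub continuous_id)).neg).integrableOn_uIoc).indicator
      measurableSet_Icc
  refine (h1.add h2).congr ?_
  have hae : ∀ᵐ x : ℝ ∂(volume.restrict (Set.uIoc a b)), x ≠ tn := by
    refine (ae_restrict_of_ae ?_)
    rw [ae_iff]
    simpa using (measure_singleton (μ := (volume : Measure ℝ)) tn)
  filter_upwards [hae] with x hx
  exact (ftilde_ae_eq g tn tn1 h hx).symm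

lemma key_step {g : ℝ → ℝ} (hg : Continuous g) {tn tn1 : ℝ} (htn : 0 < tn)
    (h : 2 * tn ≤ tn1) (hnn : ∀ t ∈ Icc (0:ℝ) tn, 0 ≤ g t) :
    ∀ t ∈ Icc (0:ℝ) tn1, 0 ≤ ∫ s in (0:ℝ)..t, ftilde g tn tn1 s := by
  intro t ht
  have intble := ftilde_intble hg h
  -- value on the middle plateau
  have hmid : ∀ u, tn ≤ u → u ≤ tn1 - tn →
      (∫ s in (0:ℝ)..u, ftilde g tn tn1 s) = ∫ s in (0:ℝ)..tn, g s := by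
    intro u hu1 hu2
    rw [← intervalIntegral.integral_add_adjacent_intervals (intble 0 tn) (intble tn u)]
    have e1 : (∫ s in (0:ℝ)..tn, ftilde g tn tn1 s) = ∫ s in (0:ℝ)..tn, g s := by
      apply intervalIntegral.integral_congr
      intro s hs
      rw [uIcc_of_le htn.le] at hs
      unfold ftilde
      rw [if_pos ⟨hs.1, hs.2⟩]
    have e2 : (∫ s in tn..u, ftilde g tn tn1 s) = 0 := by
      rw [← intervalIntegral.integral_zero (a := tn) (b := u) (μ := volume)]
      apply intervalIntegral.integral_congr_ae
      have hae : ∀ᵐ x : ℝ ∂(volume : Measure ℝ), x ≠ tn1 - tn := by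
        rw [ae_iff]
        simpa using (measure_singleton (μ := (volume : Measure ℝ)) (tn1 - tn))
      filter_upwards [hae] with x hx hmem
      rw [uIoc_of_le hu1] at hmem
      unfold ftilde
      rw [if_neg (by push_neg; intro _; exact hmem.1), if_neg]
      rintro ⟨ha, hb⟩
      exact hx (le_antisymm (hmem.2.trans hu2) ha)
    rw [e1, e2, add_zero]
  rcases le_or_gt t tn with hA | hA
  · -- first segment
    apply intervalIntegral.integral_nonneg ht.1
    intro u hu
    unfold ftilde
    rw [if_pos ⟨hu.1, hu.2.trans hA⟩]
    exact hnn u ⟨hu.1, hu.2.trans hA⟩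
  rcases le_or_gt t (tn1 - tn) with hB | hB
  · rw [hmid t hA.le hB]
    exact intervalIntegral.integral_nonneg htn.le (fun u hu => hnn u hu)
  · -- last segment
    have hg' : ∀ a b : ℝ, IntervalIntegrable g volume a b := fun a b => hg.intervalIntegrable a b
    rw [← intervalIntegral.integral_add_adjacent_intervals (intble 0 (tn1 - tn)) (intble (tn1 - tn) t)]
    have e1 := hmid (tn1 - tn) (by linarith) le_rfl
    have e2 : (∫ s in (tn1 - tn)..t, ftilde g tn tn1 s)
        = ∫ s in (tn1 - tn)..t, -g (tn1 - s) := by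
      apply intervalIntegral.integral_congr_ae
      filter_upwards [] with x hmem
      rw [uIoc_of_le hB.le] at hmem
      unfold ftilde
      rw [if_neg (by push_neg; intro _; linarith [hmem.1]), if_pos ⟨hmem.1.le, hmem.2.trans ht.2⟩]
    have e3 : (∫ s in (tn1 - tn)..t, -g (tn1 - s)) = -∫ s in (tn1 - t)..tn, g s := by
      rw [intervalIntegral.integral_neg, intervalIntegral.integral_comp_sub_left g tn1]
      norm_num
    rw [e1, e2, e3]
    have e4 : (∫ s in (0:ℝ)..tn, g s)
        = (∫ s in (0:ℝ)..(tn1 - t), g s) + ∫ s in (tn1 - t)..tn, g s :=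
      (intervalIntegral.integral_add_adjacent_intervals (hg' _ _) (hg' _ _)).symm
    rw [e4]
    have : 0 ≤ ∫ s in (0:ℝ)..(tn1 - t), g s := by
      apply intervalIntegral.integral_nonneg (by linarith [ht.2])
      intro u hu
      exact hnn u ⟨hu.1, by linarith [hu.2]⟩
    linarith

example : True := trivial

theorem fseq_nonneg (ts : ℕ → ℝ) (c : ℝ) (hc : 0 < c) (ht0 : 0 < ts 0)
    (hts : ∀ n, 2 * ts n ≤ ts (n + 1)) :
    ∀ n : ℕ, ∀ t ∈ Set.Icc (0 : ℝ) (ts n), 0 ≤ fseq ts c n t := by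
  have hpos : ∀ n, 0 < ts n := by
    intro n
    induction n with
    | zero => exact ht0
    | succ n ih => linarith [hts n]
  have key : ∀ n, Continuous (fseq ts c n) ∧ ∀ t ∈ Set.Icc (0 : ℝ) (ts n), 0 ≤ fseq ts c n t := by
    intro n
    induction n with
    | zero => exact ⟨continuous_const, fun t _ => hc.le⟩
    | succ n ih =>
      constructor
      · exact intervalIntegral.continuous_primitive (ftilde_intble ih.1 (hts n)) 0
      · exact key_step ih.1 (hpos n) (hts n) ih.2
  exact fun n => (key n).2
end

section
/- For the recursively defined sequence (f_n), each f_n is symmetric on its domain: f_n(t) = f_n(t_n - t) for all t ∈ [0,t_n] and all n ≥ 0. -/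
open MeasureTheory Set

lemma ftilde_eq (g : ℝ → ℝ) (tn T : ℝ) :
    ftilde g tn T = (Icc 0 tn).piecewise g
      ((Icc (T - tn) T).piecewise (fun t => -g (T - t)) 0) := by
  funext t
  simp only [ftilde, Set.piecewise, mem_Icc, Pi.zero_apply]

lemma ftilde_integrable {g : ℝ → ℝ} (hg : Continuous g) {tn T : ℝ}
    (h0 : 0 < tn) (h2 : 2 * tn ≤ T) : Integrable (ftilde g tn T) := by
  obtain ⟨M, hM⟩ := (isCompact_Icc : IsCompact (Icc (0:ℝ) tn)).exists_bound_of_continuousOn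
    hg.continuousOn
  have hM0 : 0 ≤ M := le_trans (norm_nonneg _) (hM 0 ⟨le_refl 0, h0.le⟩)
  refine Integrable.mono' (g := (Icc (0:ℝ) T).indicator fun _ => M) ?_ ?_ ?_
  · exact (integrable_indicator_iff measurableSet_Icc).2
      (integrableOn_const measure_Icc_lt_top.ne)
  · rw [ftilde_eq]
    exact (Measurable.piecewise measurableSet_Icc hg.measurable
      (Measurable.piecewise measurableSet_Icc
        ((hg.measurable.comp (measurable_const.sub measurable_id)).neg)
        measurable_const)).aestronglyMeasurable
  · filter_upwards with t
    unfold ftilde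
    split_ifs with h1 hb
    · rw [Set.indicator_of_mem (show t ∈ Icc (0:ℝ) T from ⟨h1.1, h1.2.trans (by linarith)⟩)]
      exact hM t h1
    · rw [Set.indicator_of_mem (show t ∈ Icc (0:ℝ) T from ⟨by linarith [hb.1], hb.2⟩), norm_neg]
      exact hM _ ⟨by linarith [hb.2], by linarith [hb.1]⟩
    · simp only [norm_zero]
      exact Set.indicator_nonneg (fun _ _ => hM0) t

lemma ftilde_antisymm {g : ℝ → ℝ} {tn T : ℝ} (h0 : 0 < tn) (h2 : 2 * tn ≤ T)
    {s : ℝ} (hs : s ≠ tn) : ftilde g tn T (T - s) = - ftilde g tn T s := by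
  by_cases hA : 0 ≤ s ∧ s ≤ tn
  · have hslt : s < tn := lt_of_le_of_ne hA.2 hs
    have c1 : ¬(0 ≤ T - s ∧ T - s ≤ tn) := by rintro ⟨_, h⟩; linarith
    have c2 : T - tn ≤ T - s ∧ T - s ≤ T := ⟨by linarith [hA.2], by linarith [hA.1]⟩
    simp only [ftilde, if_pos hA, if_neg c1, if_pos c2, sub_sub_cancel]
  by_cases hB : T - tn ≤ s ∧ s ≤ T
  · have c1 : 0 ≤ T - s ∧ T - s ≤ tn := ⟨by linarith [hB.2], by linarith [hB.1]⟩
    simp only [ftilde, if_pos c1, if_neg hA, if_pos hB, neg_neg]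
  · have hA' : ¬(0 ≤ T - s ∧ T - s ≤ tn) := by
      rintro ⟨k1, k2⟩; exact hB ⟨by linarith, by linarith⟩
    have hB' : ¬(T - tn ≤ T - s ∧ T - s ≤ T) := by
      rintro ⟨k1, k2⟩; exact hA ⟨by linarith, by linarith⟩
    simp only [ftilde, if_neg hA, if_neg hB, if_neg hA', if_neg hB', neg_zero]

theorem fseq_symm (ts : ℕ → ℝ) (c : ℝ) (hc : 0 < c) (ht0 : 0 < ts 0)
    (hts : ∀ n, 2 * ts n ≤ ts (n + 1)) :
    ∀ n : ℕ, ∀ t ∈ Set.Icc (0 : ℝ) (ts n), fseq ts c n t = fseq ts c n (ts n - t) := by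
  have tspos : ∀ n, 0 < ts n := by
    intro n; induction n with
    | zero => exact ht0
    | succ k ih => have := hts k; linarith
  have tcont : ∀ n, Continuous (fseq ts c n) := by
    intro n; induction n with
    | zero => exact continuous_const
    | succ k ih =>
      have hint := ftilde_integrable ih (tspos k) (hts k)
      simpa [fseq] using
        intervalIntegral.continuous_primitive (fun a b => hint.intervalIntegrable) 0
  intro n t _
  cases n with
  | zero => rfl
  | succ k =>
    set g := fseq ts c k with hg
    set tn := ts k
    set T := ts (k + 1) with hT
    have hint : Integrable (ftilde g tn T) := ftilde_integrable (tcont k) (tspos k) (hts k)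
    have hae : ∀ a b : ℝ,
        (∫ x in a..b, ftilde g tn T (T - x)) = -∫ x in a..b, ftilde g tn T x := by
      intro a b
      rw [← intervalIntegral.integral_neg]
      apply intervalIntegral.integral_congr_ae
      have htn : ∀ᵐ x : ℝ, x ≠ tn := by
        rw [ae_iff]
        simp only [ne_eq, not_not, setOf_eq_eq_singleton]
        exact Real.volume_singleton
      filter_upwards [htn] with x hx _
      exact ftilde_antisymm (tspos k) (hts k) hx
    have key : ∀ a b : ℝ,
        (∫ x in (T - b)..(T - a), ftilde g tn T x) = -∫ x in a..b, ftilde g tn T x := by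
      intro a b
      rw [← intervalIntegral.integral_comp_sub_left (fun x => ftilde g tn T x) T]
      exact hae a b
    have hT0 : (∫ x in (0:ℝ)..T, ftilde g tn T x) = 0 := by
      have h := key 0 T
      simp only [sub_zero, sub_self] at h
      linarith
    show (∫ s in (0:ℝ)..t, ftilde g tn T s) = ∫ s in (0:ℝ)..(T - t), ftilde g tn T s
    have hsplit : (∫ s in (0:ℝ)..(T - t), ftilde g tn T s)
        = (∫ s in (0:ℝ)..T, ftilde g tn T s) + ∫ s in T..(T - t), ftilde g tn T s :=
      (intervalIntegral.integral_add_adjacent_intervals hint.intervalIntegrable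
        hint.intervalIntegrable).symm
    have h2 : (∫ s in T..(T - t), ftilde g tn T s) = ∫ s in (0:ℝ)..t, ftilde g tn T s := by
      have h := key 0 t
      simp only [sub_zero] at h
      rw [intervalIntegral.integral_symm]
      linarith
    rw [hsplit, hT0, h2, zero_add]
end

section
/- Let N ≥ 2 and define T̂_n = Σ_{k=n}^{N-1} x̂_k/x̂_{k+1} with x̂_0 = x̂_N = 1. If x̂*_{N-1} = 2^{(N-1)(2-N)/(2N)} and x̂*_n = (x̂*_{N-1})^{N-n} · 2^{(n-N+1)(n-N+2)/2} for 0 ≤ n ≤ N-1 (so that x̂*_0 = 1), then the conditions T̂_n = 2·T̂_{n+1} hold for all 0 ≤ n ≤ N-2, and T̂_0 = 2^{(N-1)(N+2)/(2N)}. -/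
theorem lemma9_minimum (N : ℕ) (hN : 2 ≤ N)
    (x : ℕ → ℝ)
    (hxN : x N = 1)
    (hx : ∀ n ≤ N - 1, x n =
      ((2 : ℝ) ^ (((N : ℝ) - 1) * (2 - (N : ℝ)) / (2 * (N : ℝ)))) ^ (N - n) *
        (2 : ℝ) ^ ((((n : ℝ) - (N : ℝ) + 1) * ((n : ℝ) - (N : ℝ) + 2)) / 2)) :
    (∀ n ≤ N - 2,
      (∑ k ∈ Finset.Ico n N, x k / x (k + 1)) =
        2 * ∑ k ∈ Finset.Ico (n + 1) N, x k / x (k + 1)) ∧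
    (∑ k ∈ Finset.Ico 0 N, x k / x (k + 1)) =
      (2 : ℝ) ^ (((N : ℝ) - 1) * ((N : ℝ) + 2) / (2 * (N : ℝ))) := by
  have h2 : (0:ℝ) < 2 := by norm_num
  set c : ℝ := ((N : ℝ) - 1) * (2 - (N : ℝ)) / (2 * (N : ℝ)) with hc
  -- rewrite x in single-rpow form
  have hxr : ∀ n ≤ N - 1, x n =
      (2:ℝ) ^ (c * ((N:ℝ) - (n:ℝ)) + (((n:ℝ)-(N:ℝ)+1)*((n:ℝ)-(N:ℝ)+2))/2) := by
    intro n hn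
    have hnN : n ≤ N := le_trans hn (Nat.sub_le _ _)
    rw [hx n hn, ← Real.rpow_natCast ((2:ℝ)^c) (N - n),
      ← Real.rpow_mul (by norm_num : (0:ℝ) ≤ 2),
      ← Real.rpow_add h2]
    congr 1
    rw [Nat.cast_sub hnN]
  have hN1 : 1 ≤ N := le_trans (by norm_num) hN
  -- key: tail sums
  have key : ∀ m, m ≤ N - 1 →
      (∑ k ∈ Finset.Ico (N - 1 - m) N, x k / x (k + 1)) = (2:ℝ) ^ (c + (m:ℝ)) := by
    intro m
    induction m with
    | zero =>
      intro _
      have hIco : Finset.Ico (N - 1 - 0) N = {N - 1} := by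
        ext k; simp only [Finset.mem_Ico, Finset.mem_singleton]; omega
      rw [hIco, Finset.sum_singleton]
      have hsucc : N - 1 + 1 = N := by omega
      rw [hsucc, hxN, div_one, hxr (N-1) le_rfl]
      have hcast : ((N - 1 : ℕ) : ℝ) = (N:ℝ) - 1 := by
        rw [Nat.cast_sub hN1]; norm_num
      rw [hcast]
      push_cast
      ring_nf
    | succ m ih =>
      intro hm
      have hm' : m ≤ N - 1 := by omega
      set n := N - 1 - (m + 1) with hn
      have hn1 : n + 1 = N - 1 - m := by omega
      have hnlt : n < N := by omega
      have hnle : n ≤ N - 1 := by omega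
      have hn1le : n + 1 ≤ N - 1 := by omega
      rw [Finset.sum_eq_sum_Ico_succ_bot hnlt]
      have hratio : x n / x (n + 1) = (2:ℝ) ^ (c + (m:ℝ)) := by
        rw [hxr n hnle, hxr (n+1) hn1le, ← Real.rpow_sub h2]
        congr 1
        have hcast : ((n:ℕ) : ℝ) = (N:ℝ) - 2 - (m:ℝ) := by
          have : (n:ℕ) = N - 2 - m := by omega
          rw [this, Nat.cast_sub (by omega), Nat.cast_sub hN]
          norm_num
        push_cast
        rw [hcast]
        ring
      rw [hratio, hn1, ih hm']
      have hexp : c + ((m + 1 : ℕ):ℝ) = (c + (m:ℝ)) + 1 := by push_cast; ring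
      rw [hexp, Real.rpow_add h2 (c + (m:ℝ)) 1, Real.rpow_one]
      ring
  have key' : ∀ n ≤ N - 1,
      (∑ k ∈ Finset.Ico n N, x k / x (k + 1)) = (2:ℝ) ^ (c + ((N - 1 - n : ℕ):ℝ)) := by
    intro n hn
    have := key (N - 1 - n) (Nat.sub_le _ _)
    rwa [Nat.sub_sub_self hn] at this
  constructor
  · intro n hn
    have h1 : n ≤ N - 1 := by omega
    have h2' : n + 1 ≤ N - 1 := by omega
    rw [key' n h1, key' (n+1) h2']
    have e1 : ((N - 1 - n : ℕ):ℝ) = ((N - 1 - (n+1) : ℕ):ℝ) + 1 := by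
      have : N - 1 - n = (N - 1 - (n+1)) + 1 := by omega
      rw [this]; push_cast; ring
    rw [e1, show c + (((N - 1 - (n+1) : ℕ):ℝ) + 1) = (c + ((N - 1 - (n+1) : ℕ):ℝ)) + 1 by ring,
      Real.rpow_add h2, Real.rpow_one]
    ring
  · rw [key' 0 (by omega)]
    congr 1
    have hNz : (N:ℝ) ≠ 0 := by positivity
    rw [Nat.sub_zero, Nat.cast_sub hN1, hc]
    push_cast
    field_simp
    ring
end

section
/- If x: [0,T] → ℝ is twice continuously differentiable with x(0) = x'(0) = x'(T) = 0, x(T) = s > 0, |x'(t)| ≤ v and |x''(t)| ≤ a for all t ∈ [0,T], then T ≥ s/v and T ≥ 2√(s/a) (hence T ≥ max(s/v, 2√(s/a))). -/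
theorem lower_time_bounds (T s v a : ℝ) (hT : 0 < T) (hs : 0 < s) (hv : 0 < v) (ha : 0 < a)
    (x : ℝ → ℝ) (hx : ContDiff ℝ 2 x)
    (h0 : x 0 = 0) (hd0 : deriv x 0 = 0) (hdT : deriv x T = 0) (hxT : x T = s)
    (hvb : ∀ t ∈ Set.Icc (0 : ℝ) T, |deriv x t| ≤ v)
    (hab : ∀ t ∈ Set.Icc (0 : ℝ) T, |deriv (deriv x) t| ≤ a) :
    s / v ≤ T ∧ 2 * Real.sqrt (s / a) ≤ T := by
  have hdiff : Differentiable ℝ x := hx.differentiable two_ne_zero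
  have hcd1 : ContDiff ℝ 1 (deriv x) := by
    have hx' : ContDiff ℝ (1 + 1 : ℕ) x := by exact_mod_cast hx
    exact ((contDiff_succ_iff_deriv (n := 1)).mp hx').2.2
  have hdiff' : Differentiable ℝ (deriv x) := hcd1.differentiable one_ne_zero
  -- Part 1 : s ≤ v * T
  have h1 : |x T - x 0| ≤ v * |T - 0| :=
    (convex_Icc (0:ℝ) T).norm_image_sub_le_of_norm_deriv_le
      (fun u _ => (hdiff u)) hvb
      (Set.left_mem_Icc.2 hT.le) (Set.right_mem_Icc.2 hT.le)
  have hsvT : s ≤ v * T := by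
    rw [h0, hxT, sub_zero, sub_zero, abs_of_pos hT] at h1
    exact (le_abs_self s).trans h1
  -- velocity bound on deriv x
  have key : ∀ t₀ ∈ Set.Icc (0:ℝ) T, ∀ t₁ ∈ Set.Icc (0:ℝ) T,
      |deriv x t₁ - deriv x t₀| ≤ a * |t₁ - t₀| := fun t₀ h₀ t₁ h₁ =>
    (convex_Icc (0:ℝ) T).norm_image_sub_le_of_norm_deriv_le
      (fun u _ => (hdiff' u)) hab h₀ h₁
  have hv0 : ∀ t ∈ Set.Icc (0:ℝ) T, deriv x t ≤ a * t := by
    intro t ht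
    have := key 0 (Set.left_mem_Icc.2 hT.le) t ht
    rw [hd0, sub_zero, sub_zero, abs_of_nonneg ht.1] at this
    exact (le_abs_self _).trans this
  have hvT : ∀ t ∈ Set.Icc (0:ℝ) T, deriv x t ≤ a * (T - t) := by
    intro t ht
    have := key T (Set.right_mem_Icc.2 hT.le) t ht
    rw [hdT, sub_zero] at this
    have h2 : |t - T| = T - t := by
      rw [abs_of_nonpos (by linarith [ht.2] : t - T ≤ 0)]; ring
    rw [h2] at this
    linarith [(le_abs_self (deriv x t)).trans this]
  -- first half : x (T/2) ≤ a * T^2 / 8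
  have hmem : T / 2 ∈ Set.Icc (0:ℝ) T := ⟨by linarith, by linarith⟩
  have hanti1 : AntitoneOn (fun t => x t - a * t ^ 2 / 2) (Set.Icc 0 (T / 2)) := by
    apply antitoneOn_of_deriv_nonpos (convex_Icc _ _)
    · exact (hdiff.continuous.sub (by fun_prop)).continuousOn
    · intro u _
      exact ((hdiff u).sub (by fun_prop)).differentiableWithinAt
    · intro u hu
      rw [interior_Icc] at hu
      have hdu : deriv (fun t => x t - a * t ^ 2 / 2) u = deriv x u - a * u := by
        rw [deriv_fun_sub (hdiff u) (by fun_prop)]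
        congr 1
        have : deriv (fun t : ℝ => a * t ^ 2 / 2) u = a * u := by
          rw [show (fun t : ℝ => a * t ^ 2 / 2) = fun t : ℝ => (a / 2) * t ^ 2 by
            ext t; ring]
          rw [deriv_const_mul _ (by fun_prop)]
          simp [deriv_pow]
          ring
        rw [this]
      rw [hdu]
      have := hv0 u ⟨hu.1.le, by linarith [hu.2]⟩
      linarith
  have hhalf1 : x (T / 2) ≤ a * T ^ 2 / 8 := by
    have := hanti1 (Set.left_mem_Icc.2 (by linarith)) (Set.right_mem_Icc.2 (by linarith))
      (by linarith)
    simp only [h0] at this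
    nlinarith [this]
  -- second half : x T - x (T/2) ≤ a * T^2 / 8
  have hanti2 : AntitoneOn (fun t => x t + a * (T - t) ^ 2 / 2) (Set.Icc (T / 2) T) := by
    apply antitoneOn_of_deriv_nonpos (convex_Icc _ _)
    · exact (hdiff.continuous.add (by fun_prop)).continuousOn
    · intro u _
      exact ((hdiff u).add (by fun_prop)).differentiableWithinAt
    · intro u hu
      rw [interior_Icc] at hu
      have hdu : deriv (fun t => x t + a * (T - t) ^ 2 / 2) u = deriv x u - a * (T - u) := by
        rw [deriv_fun_add (hdiff u) (by fun_prop)]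
        congr 1
        have : deriv (fun t : ℝ => a * (T - t) ^ 2 / 2) u = -(a * (T - u)) := by
          have heq : (fun t : ℝ => a * (T - t) ^ 2 / 2)
              = fun t : ℝ => (a / 2) * t ^ 2 - (a * T) * t + a * T ^ 2 / 2 := by
            ext t; ring
          rw [heq, deriv_fun_add (by fun_prop) (by fun_prop), deriv_fun_sub (by fun_prop) (by fun_prop),
            deriv_const_mul _ (by fun_prop), deriv_const_mul _ (by fun_prop)]
          simp [deriv_pow]
          ring
        rw [this]; try ring
      rw [hdu]
      have := hvT u ⟨by linarith [hu.1], hu.2.le⟩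
      linarith
  have hhalf2 : x T - x (T / 2) ≤ a * T ^ 2 / 8 := by
    have := hanti2 (Set.left_mem_Icc.2 (by linarith)) (Set.right_mem_Icc.2 (by linarith))
      (by linarith)
    simp only at this
    nlinarith [this]
  have hsaT : s ≤ a * T ^ 2 / 4 := by
    have := hxT ▸ (by linarith : x T ≤ a * T ^ 2 / 4); linarith [hhalf1, hhalf2, hxT]
  constructor
  · rw [div_le_iff₀ hv]; linarith
  · have h1 : s / a ≤ (T / 2) ^ 2 := by
      rw [div_le_iff₀ ha]; nlinarith
    have h2 : Real.sqrt (s / a) ≤ T / 2 := by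
      calc Real.sqrt (s / a) ≤ Real.sqrt ((T / 2) ^ 2) := Real.sqrt_le_sqrt h1
        _ = T / 2 := Real.sqrt_sq (by linarith)
    linarith
end
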